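/- arXiv:math/0511259 — 6 statements merged into one kernel-verified Lean document; each statement's English description precedes it below -/
import Mathlib

section
/- Let F be a finite-dimensional real inner product space, let (A_n) be a sequence of symmetric positive definite linear operators on F converging (in operator norm) to an operator A, and let (v_n) be a sequence in F converging to v. If the sequence of real numbers ⟨A_n⁻¹ v_n, v_n⟩ is bounded above (equivalently, the sequence A_n^{-1/2} v_n is bounded), then v lies in the range of A. -/
open scoped RealInnerProductSpace

/-- Cauchy–Schwarz for a positive semidefinite symmetric bilinear form
given by an operator. -/
lemma aux_cs {F : Type*} [NormedAddCommGroup F] [InnerProductSpace ℝ F]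
    (T : F →L[ℝ] F)
    (hsym : ∀ x y : F, ⟪T x, y⟫ = ⟪x, T y⟫)
    (hpos : ∀ x : F, 0 ≤ ⟪T x, x⟫) (x y : F) :
    ⟪T x, y⟫ ^ 2 ≤ ⟪T x, x⟫ * ⟪T y, y⟫ := by
  have h : ∀ t : ℝ, 0 ≤ ⟪T y, y⟫ * (t * t) + (2 * ⟪T x, y⟫) * t + ⟪T x, x⟫ := by
    intro t
    have h1 := hpos (x + t • y)
    have hyx : ⟪T y, x⟫ = ⟪T x, y⟫ := by
      rw [hsym y x, real_inner_comm]
    have hexp : ⟪T (x + t • y), x + t • y⟫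
        = ⟪T x, x⟫ + t * ⟪T x, y⟫ + t * ⟪T y, x⟫ + t * t * ⟪T y, y⟫ := by
      rw [map_add, map_smul, inner_add_left, inner_add_right, inner_add_right,
        real_inner_smul_left, real_inner_smul_left, real_inner_smul_right,
        real_inner_smul_right]
      ring
    rw [hexp, hyx] at h1
    linarith
  have := discrim_le_zero h
  rw [discrim] at this
  nlinarith [this]

/-- Lemma I.15: if positive definite symmetric operators `A n` converge to `A`,
`v n → v`, and `⟪(A n)⁻¹ (v n), v n⟫` is bounded above, then `v ∈ im A`. -/
theorem stmt0 {F : Type*} [NormedAddCommGroup F] [InnerProductSpace ℝ F]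
    [FiniteDimensional ℝ F]
    (A : ℕ → F →L[ℝ] F) (Alim : F →L[ℝ] F) (v : ℕ → F) (vlim : F)
    (hsym : ∀ n, ∀ x y : F, ⟪A n x, y⟫ = ⟪x, A n y⟫)
    (hpos : ∀ n, ∀ x : F, x ≠ 0 → 0 < ⟪A n x, x⟫)
    (hAconv : Filter.Tendsto A Filter.atTop (nhds Alim))
    (hvconv : Filter.Tendsto v Filter.atTop (nhds vlim))
    (hbdd : ∃ C : ℝ, ∀ n, ⟪Ring.inverse (A n) (v n), v n⟫ ≤ C) :
    ∃ w : F, Alim w = vlim := by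
  obtain ⟨C, hC⟩ := hbdd
  -- positivity (semi-definite form)
  have hpos' : ∀ n, ∀ x : F, 0 ≤ ⟪A n x, x⟫ := by
    intro n x
    rcases eq_or_ne x 0 with rfl | hx
    · simp
    · exact (hpos n x hx).le
  -- each A n is a unit
  have hunit : ∀ n, IsUnit (A n) := by
    intro n
    have hinj : Function.Injective (A n) := by
      intro a b hab
      by_contra hne
      have h0 : a - b ≠ 0 := sub_ne_zero.mpr hne
      have := hpos n (a - b) h0
      rw [map_sub, hab, sub_self] at this
      simp at this
    have hb : Function.Bijective ((A n) : F →ₗ[ℝ] F) :=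
      ⟨hinj, LinearMap.injective_iff_surjective.mp hinj⟩
    exact ⟨(ContinuousLinearEquiv.unitsEquiv ℝ F).symm
      (LinearEquiv.ofBijective ((A n) : F →ₗ[ℝ] F) hb).toContinuousLinearEquiv, rfl⟩
  have hinv : ∀ n, A n (Ring.inverse (A n) (v n)) = v n := by
    intro n
    have := Ring.mul_inverse_cancel (A n) (hunit n)
    calc A n (Ring.inverse (A n) (v n)) = ((A n) * Ring.inverse (A n)) (v n) := rfl
      _ = v n := by rw [this]; rfl
  -- Alim is symmetric
  have hApt : ∀ x : F, Filter.Tendsto (fun n => A n x) Filter.atTop (nhds (Alim x)) := by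
    intro x
    exact ((ContinuousLinearMap.apply ℝ F x).continuous.tendsto Alim).comp hAconv
  have hsymlim : ∀ x y : F, ⟪Alim x, y⟫ = ⟪x, Alim y⟫ := by
    intro x y
    have h1 : Filter.Tendsto (fun n => ⟪A n x, y⟫) Filter.atTop (nhds ⟪Alim x, y⟫) :=
      ((continuous_inner.comp (Continuous.prodMk continuous_id continuous_const)).tendsto
        (Alim x)).comp (hApt x)
    have h2 : Filter.Tendsto (fun n => ⟪x, A n y⟫) Filter.atTop (nhds ⟪x, Alim y⟫) :=
      ((continuous_inner.comp (Continuous.prodMk continuous_const continuous_id)).tendsto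
        (Alim y)).comp (hApt y)
    exact tendsto_nhds_unique (h1.congr fun n => (hsym n x y)) h2
  -- decompose vlim
  set S : Submodule ℝ F := LinearMap.range (Alim : F →ₗ[ℝ] F) with hS
  set u : F := vlim - (S.orthogonalProjectionOnto vlim : F) with hu
  have humem : u ∈ Sᗮ := S.sub_starProjection_mem_orthogonal vlim
  obtain ⟨w, hw⟩ : (S.orthogonalProjectionOnto vlim : F) ∈ S := (S.orthogonalProjectionOnto vlim).2
  -- ⟪Alim u, u⟫ = 0
  have hAlimu : ⟪Alim u, u⟫ = 0 := by
    have : Alim u ∈ S := ⟨u, rfl⟩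
    exact humem (Alim u) this
  -- ⟪vlim, u⟫ = ‖u‖²
  have hvu : ⟪vlim, u⟫ = ‖u‖ ^ 2 := by
    have h0 : ⟪(S.orthogonalProjectionOnto vlim : F), u⟫ = 0 := by
      exact humem _ (S.orthogonalProjectionOnto vlim).2
    have heq : vlim = (S.orthogonalProjectionOnto vlim : F) + u := by rw [hu]; abel
    rw [heq, inner_add_left, h0, zero_add, real_inner_self_eq_norm_sq]
  -- key inequality
  have hkey : ∀ n, ⟪v n, u⟫ ^ 2 ≤ max C 0 * ⟪A n u, u⟫ := by
    intro n
    set x := Ring.inverse (A n) (v n)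
    have hx : A n x = v n := hinv n
    have hcs := aux_cs (A n) (hsym n) (hpos' n) x u
    rw [hx] at hcs
    have hxx : ⟪A n x, x⟫ ≤ max C 0 := by
      rw [hx, real_inner_comm]
      exact le_trans (hC n) (le_max_left _ _)
    have h2 : ⟪A n x, x⟫ * ⟪A n u, u⟫ ≤ max C 0 * ⟪A n u, u⟫ :=
      mul_le_mul_of_nonneg_right hxx (hpos' n u)
    rw [hx] at h2
    exact le_trans hcs h2
  -- take limits
  have hlhs : Filter.Tendsto (fun n => ⟪v n, u⟫ ^ 2) Filter.atTop (nhds (⟪vlim, u⟫ ^ 2)) := by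
    exact (Filter.Tendsto.pow (((continuous_inner.comp
      (Continuous.prodMk continuous_id continuous_const)).tendsto vlim).comp hvconv) 2)
  have hrhs : Filter.Tendsto (fun n => max C 0 * ⟪A n u, u⟫) Filter.atTop
      (nhds (max C 0 * ⟪Alim u, u⟫)) := by
    exact Filter.Tendsto.const_mul _ (((continuous_inner.comp
      (Continuous.prodMk continuous_id continuous_const)).tendsto (Alim u)).comp (hApt u))
  have hfin : ⟪vlim, u⟫ ^ 2 ≤ max C 0 * ⟪Alim u, u⟫ :=
    le_of_tendsto_of_tendsto' hlhs hrhs hkey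
  rw [hAlimu, mul_zero, hvu] at hfin
  have hunorm : ‖u‖ = 0 := by
    have h2 : ‖u‖ ^ 2 = 0 := by nlinarith [sq_nonneg (‖u‖ ^ 2)]
    simpa using (pow_eq_zero_iff (by norm_num : (2:ℕ) ≠ 0)).mp h2
  have hu0 : u = 0 := norm_eq_zero.mp hunorm
  refine ⟨w, ?_⟩
  -- conclude
  have hveq : vlim = (S.orthogonalProjectionOnto vlim : F) :=
    sub_eq_zero.mp (hu ▸ hu0)
  rw [hveq]
  exact hw
end

section
/- Let V be a real vector space of dimension 2r with a nondegenerate alternating bilinear form ω, and let L₁, L₂, L₃ be three Lagrangian subspaces of V. Then there exist vectors e₁,…,e_r, f₁,…,f_r in V with ω(eᵢ,eⱼ) = 0, ω(fᵢ,fⱼ) = 0 and ω(eᵢ,fⱼ) = δᵢⱼ for all i,j (a symplectic basis), and real numbers θⱼ⁽ᵏ⁾ (1 ≤ j ≤ r, k = 1,2,3) such that for each k the subspace L_k is spanned by the vectors cos θⱼ⁽ᵏ⁾·eⱼ + sin θⱼ⁽ᵏ⁾·fⱼ, j = 1,…,r. -/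
open Module Submodule

section Helpers

variable {V : Type*} [AddCommGroup V] [Module ℝ V]
  (ω : V →ₗ[ℝ] V →ₗ[ℝ] ℝ)

/-- skew-symmetry from alternating -/
lemma my_skew (halt : ∀ x : V, ω x x = 0) (x y : V) : ω x y = -ω y x := by
  have h := halt (x + y)
  simp only [map_add, LinearMap.add_apply, halt x, halt y] at h
  linarith

/-- find a dual partner -/
lemma my_partner (hnd : ∀ x : V, (∀ y : V, ω x y = 0) → x = 0) {v : V} (hv : v ≠ 0) :
    ∃ f : V, ω v f = 1 := by
  by_contra h
  push_neg at h
  apply hv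
  apply hnd
  intro y
  by_contra hy
  exact h ((ω v y)⁻¹ • y) (by rw [map_smul, smul_eq_mul]; field_simp)

/-- normalize a nonzero pair of reals to (cos θ, sin θ) up to positive scalar -/
lemma my_normalize {c s : ℝ} (h : ¬(c = 0 ∧ s = 0)) :
    ∃ θ m : ℝ, m ≠ 0 ∧ Real.cos θ = m * c ∧ Real.sin θ = m * s := by
  set z : ℂ := ⟨c, s⟩ with hz
  have hz0 : z ≠ 0 := by
    intro hz0
    exact h ⟨congrArg Complex.re hz0, congrArg Complex.im hz0⟩
  have habs : ‖z‖ ≠ 0 := norm_ne_zero_iff.mpr hz0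
  refine ⟨Complex.arg z, (‖z‖)⁻¹, inv_ne_zero habs, ?_, ?_⟩
  · rw [Complex.cos_arg hz0]
    show _ = _ * z.re
    field_simp
  · rw [Complex.sin_arg]
    show _ = _ * z.im
    field_simp




/-- Splitting a Lagrangian along a hyperbolic plane it meets. -/
lemma my_plane_split (halt : ∀ x : V, ω x x = 0) {e₀ f₀ : V} (h1 : ω e₀ f₀ = 1)
    {L : Submodule ℝ V} (hiso : ∀ x ∈ L, ∀ y ∈ L, ω x y = 0)
    {a b : ℝ} (hab : ¬(a = 0 ∧ b = 0)) (hg : a • e₀ + b • f₀ ∈ L) :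
    L ≤ (ℝ ∙ (a • e₀ + b • f₀)) ⊔ (LinearMap.ker (ω e₀) ⊓ LinearMap.ker (ω f₀)) := by
  intro x hx
  set g : V := a • e₀ + b • f₀ with hgdef
  have hfe : ω f₀ e₀ = -1 := by rw [my_skew ω halt, h1]
  have hee := halt e₀
  have hff := halt f₀
  have heg : ω e₀ g = b := by simp [hgdef, map_add, map_smul, hee, h1]
  have hfg : ω f₀ g = -a := by simp [hgdef, map_add, map_smul, hff, hfe]
  have hrel : a * ω e₀ x + b * ω f₀ x = 0 := by
    have h0 := hiso _ hg _ hx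
    simpa [hgdef, map_add, LinearMap.add_apply, LinearMap.smul_apply, smul_eq_mul] using h0
  obtain ⟨t, ht1, ht2⟩ : ∃ t : ℝ, ω e₀ x - t * b = 0 ∧ ω f₀ x + t * a = 0 := by
    by_cases ha : a = 0
    · have hb : b ≠ 0 := fun hb => hab ⟨ha, hb⟩
      refine ⟨ω e₀ x / b, by field_simp; ring, ?_⟩
      have : b * ω f₀ x = 0 := by rw [ha] at hrel; linarith
      have : ω f₀ x = 0 := by
        rcases mul_eq_zero.mp this with h | h
        · exact absurd h hb
        · exact h
      rw [this, ha]; ring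
    · refine ⟨-(ω f₀ x) / a, ?_, by field_simp; ring⟩
      field_simp
      linarith [hrel]
  have hmem : x - t • g ∈ LinearMap.ker (ω e₀) ⊓ LinearMap.ker (ω f₀) := by
    rw [Submodule.mem_inf]
    constructor
    · rw [LinearMap.mem_ker, map_sub, map_smul, heg, smul_eq_mul]; linarith
    · rw [LinearMap.mem_ker, map_sub, map_smul, hfg, smul_eq_mul]; linarith
  exact Submodule.mem_sup.mpr ⟨t • g, smul_mem _ t (mem_span_singleton_self g),
    x - t • g, hmem, by abel⟩



end Helpers

section Main

variable {V : Type*} [AddCommGroup V] [Module ℝ V]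

lemma my_lagrangian_partner {V : Type*} [AddCommGroup V] [Module ℝ V] [FiniteDimensional ℝ V]
    (ω : V →ₗ[ℝ] V →ₗ[ℝ] ℝ) {r : ℕ} (hdim : finrank ℝ V = 2 * r)
    (halt : ∀ x : V, ω x x = 0) (hnd : ∀ x : V, (∀ y : V, ω x y = 0) → x = 0)
    {L : Submodule ℝ V} (hr : finrank ℝ L = r)
    (hiso : ∀ x ∈ L, ∀ y ∈ L, ω x y = 0) {v : V} (hv : v ∉ L) :
    ∃ f ∈ L, ω v f = 1 := by
  have hrefl : ω.IsRefl := fun x y h => by rw [my_skew ω halt, h, neg_zero]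
  have hndB : LinearMap.BilinForm.Nondegenerate ω :=
    ⟨fun x hx => hnd x hx, fun y hy => hnd y fun x => by rw [my_skew ω halt, hy x, neg_zero]⟩
  have hle : L ≤ LinearMap.BilinForm.orthogonal ω L := fun x hx y hy => hiso y hy x hx
  have hfr : finrank ℝ (LinearMap.BilinForm.orthogonal ω L) = r := by
    rw [LinearMap.BilinForm.finrank_orthogonal hndB, hdim, hr]
    omega
  have heq : L = LinearMap.BilinForm.orthogonal ω L :=
    Submodule.eq_of_le_of_finrank_le hle (by rw [hfr, hr])
  have hvo : v ∉ LinearMap.BilinForm.orthogonal ω L := heq ▸ hv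
  rw [LinearMap.BilinForm.mem_orthogonal_iff] at hvo
  push_neg at hvo
  obtain ⟨n, hn, hno⟩ := hvo
  have hvn : ω v n ≠ 0 := by
    rw [my_skew ω halt]
    simpa [LinearMap.BilinForm.IsOrtho] using hno
  refine ⟨(ω v n)⁻¹ • n, smul_mem _ _ hn, ?_⟩
  rw [map_smul, smul_eq_mul, inv_mul_cancel₀ hvn]

lemma my_prestep [FiniteDimensional ℝ V]
    (ω : V →ₗ[ℝ] V →ₗ[ℝ] ℝ) {n : ℕ} (hdim : finrank ℝ V = 2 * (n + 1))
    (halt : ∀ x : V, ω x x = 0) (hnd : ∀ x : V, (∀ y : V, ω x y = 0) → x = 0)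
    (L : Fin 3 → Submodule ℝ V) (hrank : ∀ k, finrank ℝ (L k) = n + 1)
    (hiso : ∀ k, ∀ x ∈ L k, ∀ y ∈ L k, ω x y = 0) :
    ∃ (e₀ f₀ : V) (c s : Fin 3 → ℝ), ω e₀ f₀ = 1 ∧
      ∀ k, ¬(c k = 0 ∧ s k = 0) ∧ c k • e₀ + s k • f₀ ∈ L k := by
  by_cases hpair : ∀ i j : Fin 3, i ≠ j → L i ⊓ L j = ⊥
  · -- all pairwise transverse
    have hsup : ∀ i j : Fin 3, i ≠ j → L i ⊔ L j = ⊤ := by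
      intro i j hij
      apply Submodule.eq_top_of_finrank_eq
      have h2 := Submodule.finrank_sup_add_finrank_inf_eq (L i) (L j)
      rw [hpair i j hij, finrank_bot, add_zero, hrank, hrank] at h2
      rw [h2, hdim]; ring
    obtain ⟨a, ha0, b, hb1, hab2, hne⟩ :
        ∃ a ∈ L 0, ∃ b ∈ L 1, a + b ∈ L 2 ∧ ω a b ≠ 0 := by
      by_contra hC
      push_neg at hC
      have step2 : ∀ a ∈ L 0, ∀ b ∈ L 1, a + b ∈ L 2 → ∀ a' ∈ L 0, ∀ b' ∈ L 1,
          a' + b' ∈ L 2 → ω a' b = 0 := by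
        intro a ha b hb h2 a' ha' b' hb' h2'
        have e1 : ω (a + b) (a' + b') = 0 := hiso 2 _ h2 _ h2'
        have e2 : ω (a + a') (b + b') = 0 := hC _ (add_mem ha ha') _ (add_mem hb hb')
          (by have := add_mem h2 h2'; convert this using 1; abel)
        have eaa : ω a a' = 0 := hiso 0 _ ha _ ha'
        have ebb : ω b b' = 0 := hiso 1 _ hb _ hb'
        have eab : ω a b = 0 := hC _ ha _ hb h2
        have eab' : ω a' b' = 0 := hC _ ha' _ hb' h2'
        have hba' : ω b a' = -ω a' b := my_skew ω halt b a'
        simp only [map_add, LinearMap.add_apply] at e1 e2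
        linarith
      have hbot : L 2 = ⊥ := by
        rw [eq_bot_iff]
        intro z hz
        have hztop : z ∈ L 0 ⊔ L 1 := by rw [hsup 0 1 (by decide)]; exact Submodule.mem_top
        obtain ⟨a, ha, b, hb, hzab⟩ := Submodule.mem_sup.mp hztop
        have hzsum : a + b ∈ L 2 := by rw [hzab]; exact hz
        have hb0 : b = 0 := by
          apply hnd
          have hx0 : ∀ x ∈ L 0, ω x b = 0 := by
            intro x hx
            have hxtop : x ∈ L 2 ⊔ L 1 := by rw [hsup 2 1 (by decide)]; exact Submodule.mem_top
            obtain ⟨z', hz', b₁, hb₁, hxz⟩ := Submodule.mem_sup.mp hxtop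
            have hxb : x + (-b₁) ∈ L 2 := by
              have : x + (-b₁) = z' := by rw [← hxz]; abel
              rw [this]; exact hz'
            exact step2 a ha b hb hzsum x hx (-b₁) (neg_mem hb₁) hxb
          intro y
          have hytop : y ∈ L 0 ⊔ L 1 := by rw [hsup 0 1 (by decide)]; exact Submodule.mem_top
          obtain ⟨x, hx, y', hy', rfl⟩ := Submodule.mem_sup.mp hytop
          rw [map_add]
          have h1 : ω b x = -ω x b := my_skew ω halt b x
          rw [h1, hx0 x hx, hiso 1 _ hb _ hy']
          ring
        have hz0 : z ∈ L 0 := by rw [← hzab, hb0, add_zero]; exact ha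
        have : z ∈ L 2 ⊓ L 0 := ⟨hz, hz0⟩
        rw [hpair 2 0 (by decide)] at this
        exact this
      have := hrank 2
      rw [hbot, finrank_bot] at this
      exact absurd this.symm (Nat.succ_ne_zero n)
    refine ⟨a, (ω a b)⁻¹ • b, ![1, 0, 1], ![0, 1, ω a b], ?_, ?_⟩
    · rw [map_smul, smul_eq_mul, inv_mul_cancel₀ hne]
    · intro k
      fin_cases k
      · exact ⟨by simp, by simpa using ha0⟩
      · exact ⟨by simp, by simpa using smul_mem _ _ hb1⟩
      · refine ⟨by simp, ?_⟩
        have heq : (1 : ℝ) • a + (ω a b) • ((ω a b)⁻¹ • b) = a + b := by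
          rw [one_smul, smul_smul, mul_inv_cancel₀ hne, one_smul]
        show (![(1:ℝ), 0, 1] 2) • a + (![(0:ℝ), 1, ω a b] 2) • ((ω a b)⁻¹ • b) ∈ L 2
        simp only [Matrix.cons_val_two, Matrix.tail_cons, Matrix.head_cons]
        rw [heq]
        exact hab2
  · push_neg at hpair
    obtain ⟨i, j, hij, hnb⟩ := hpair
    obtain ⟨v, hv, hv0⟩ := Submodule.exists_mem_ne_zero_of_ne_bot hnb
    by_cases hall : ∀ k, v ∈ L k
    · obtain ⟨f, hf⟩ := my_partner ω hnd hv0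
      exact ⟨v, f, fun _ => 1, fun _ => 0, hf,
        fun k => ⟨by simp, by simpa using hall k⟩⟩
    · push_neg at hall
      obtain ⟨m, hm⟩ := hall
      obtain ⟨f, hfm, hvf⟩ := my_lagrangian_partner ω hdim halt hnd (hrank m) (hiso m) hm
      refine ⟨v, f, fun k => if k = m then 0 else 1, fun k => if k = m then 1 else 0, hvf, ?_⟩
      intro k
      by_cases hk : k = m
      · subst hk
        refine ⟨by simp, by simpa using hfm⟩
      · have hvk : v ∈ L k := by
          have hmi : m ≠ i := fun h => hm (h ▸ hv.1)
          have hmj : m ≠ j := fun h => hm (h ▸ hv.2)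
          have htri : ∀ i j m k : Fin 3, i ≠ j → m ≠ i → m ≠ j → k ≠ m → k = i ∨ k = j := by
            decide
          rcases htri i j m k hij hmi hmj hk with rfl | rfl
          · exact hv.1
          · exact hv.2
        refine ⟨by simp [hk], by simpa [hk] using hvk⟩

lemma my_step [FiniteDimensional ℝ V]
    (ω : V →ₗ[ℝ] V →ₗ[ℝ] ℝ) {n : ℕ} (hdim : finrank ℝ V = 2 * (n + 1))
    (halt : ∀ x : V, ω x x = 0) (hnd : ∀ x : V, (∀ y : V, ω x y = 0) → x = 0)
    (L : Fin 3 → Submodule ℝ V) (hrank : ∀ k, finrank ℝ (L k) = n + 1)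
    (hiso : ∀ k, ∀ x ∈ L k, ∀ y ∈ L k, ω x y = 0) :
    ∃ (e₀ f₀ : V) (θ₀ : Fin 3 → ℝ), ω e₀ f₀ = 1 ∧ ∀ k,
      (Real.cos (θ₀ k) • e₀ + Real.sin (θ₀ k) • f₀ ∈ L k) ∧
      L k ≤ (ℝ ∙ (Real.cos (θ₀ k) • e₀ + Real.sin (θ₀ k) • f₀)) ⊔
        (LinearMap.ker (ω e₀) ⊓ LinearMap.ker (ω f₀)) := by
  obtain ⟨e₀, f₀, c, s, h1, hk⟩ := my_prestep ω hdim halt hnd L hrank hiso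
  choose θ mm hm hcos hsin using fun k => my_normalize (hk k).1
  refine ⟨e₀, f₀, θ, h1, fun k => ?_⟩
  have hg : Real.cos (θ k) • e₀ + Real.sin (θ k) • f₀ = mm k • (c k • e₀ + s k • f₀) := by
    rw [hcos, hsin, smul_add, smul_smul, smul_smul]
  have hmem : Real.cos (θ k) • e₀ + Real.sin (θ k) • f₀ ∈ L k := by
    rw [hg]; exact smul_mem _ _ (hk k).2
  refine ⟨hmem, ?_⟩
  have hcs : ¬(Real.cos (θ k) = 0 ∧ Real.sin (θ k) = 0) := by
    rintro ⟨h1', h2'⟩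
    have h3 := Real.sin_sq_add_cos_sq (θ k)
    rw [h1', h2'] at h3
    norm_num at h3
  exact my_plane_split ω halt h1 (hiso k) hcs hmem

universe u

lemma my_key (n : ℕ) : ∀ (V : Type u) [AddCommGroup V] [Module ℝ V] [FiniteDimensional ℝ V]
    (ω : V →ₗ[ℝ] V →ₗ[ℝ] ℝ), finrank ℝ V = 2 * n → (∀ x : V, ω x x = 0) →
    (∀ x : V, (∀ y : V, ω x y = 0) → x = 0) →
    ∀ L : Fin 3 → Submodule ℝ V, (∀ k, finrank ℝ (L k) = n) →
    (∀ k, ∀ x ∈ L k, ∀ y ∈ L k, ω x y = 0) →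
    ∃ (e f : Fin n → V),
      (∀ i j, ω (e i) (e j) = 0) ∧ (∀ i j, ω (f i) (f j) = 0) ∧
      (∀ i j, ω (e i) (f j) = if i = j then 1 else 0) ∧
      ∃ θ : Fin 3 → Fin n → ℝ, ∀ k, L k = Submodule.span ℝ
        (Set.range fun j => Real.cos (θ k j) • e j + Real.sin (θ k j) • f j) := by
  induction n with
  | zero =>
    intro V _ _ _ ω hdim halt hnd L hrank hiso
    refine ⟨Fin.elim0, Fin.elim0, fun i => i.elim0, fun i => i.elim0, fun i => i.elim0,
      fun _ => Fin.elim0, fun k => ?_⟩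
    have h0 : L k = ⊥ := Submodule.finrank_eq_zero.mp (hrank k)
    rw [h0, Set.range_eq_empty, Submodule.span_empty]
  | succ n ih =>
    intro V _ _ _ ω hdim halt hnd L hrank hiso
    obtain ⟨e₀, f₀, θ₀, h1, hstep⟩ := my_step ω hdim halt hnd L hrank hiso
    set W : Submodule ℝ V := LinearMap.ker (ω e₀) ⊓ LinearMap.ker (ω f₀) with hWdef
    set g : Fin 3 → V := fun k => Real.cos (θ₀ k) • e₀ + Real.sin (θ₀ k) • f₀ with hgdef
    have hskew := my_skew ω halt
    have hfe : ω f₀ e₀ = -1 := by rw [hskew, h1]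
    have hWmem : ∀ x : V, x ∈ W ↔ ω e₀ x = 0 ∧ ω f₀ x = 0 := by
      intro x
      simp [hWdef, Submodule.mem_inf, LinearMap.mem_ker]
    -- decomposition of V along the plane and W
    have hdecomp : ∀ v : V, v - (ω e₀ v) • f₀ + (ω f₀ v) • e₀ ∈ W := by
      intro v
      rw [hWmem]
      constructor
      · simp only [map_sub, map_add, map_smul, smul_eq_mul, halt, h1]
        ring
      · simp only [map_sub, map_add, map_smul, smul_eq_mul, halt, hfe]
        ring
    have hge : ∀ k, ω e₀ (g k) = Real.sin (θ₀ k) := by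
      intro k
      simp only [hgdef, map_add, map_smul, smul_eq_mul, halt, h1]
      ring
    have hgf : ∀ k, ω f₀ (g k) = -Real.cos (θ₀ k) := by
      intro k
      simp only [hgdef, map_add, map_smul, smul_eq_mul, halt, hfe]
      ring
    have htrig : ∀ k, ¬(Real.cos (θ₀ k) = 0 ∧ Real.sin (θ₀ k) = 0) := by
      rintro k ⟨h1', h2'⟩
      have h3 := Real.sin_sq_add_cos_sq (θ₀ k)
      rw [h1', h2'] at h3
      norm_num at h3
    have hgne : ∀ k, g k ≠ 0 := by
      intro k hg0
      apply htrig k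
      constructor
      · have := hgf k
        rw [hg0, map_zero] at this
        linarith
      · have := hge k
        rw [hg0, map_zero] at this
        linarith
    -- L k = span (g k) ⊔ (L k ⊓ W)
    have hLk : ∀ k, L k = (ℝ ∙ g k) ⊔ (L k ⊓ W) := by
      intro k
      have hle : (ℝ ∙ g k) ≤ L k := (span_singleton_le_iff_mem _ _).mpr (hstep k).1
      calc L k = ((ℝ ∙ g k) ⊔ W) ⊓ L k := (inf_eq_right.mpr (hstep k).2).symm
        _ = (ℝ ∙ g k) ⊔ (W ⊓ L k) := sup_inf_assoc_of_le W hle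
        _ = (ℝ ∙ g k) ⊔ (L k ⊓ W) := by rw [inf_comm]
    have hspanW : ∀ k, (ℝ ∙ g k) ⊓ W = ⊥ := by
      intro k
      rw [eq_bot_iff]
      intro x hx
      rw [Submodule.mem_inf] at hx
      obtain ⟨hx1, hx2⟩ := hx
      obtain ⟨t, rfl⟩ := Submodule.mem_span_singleton.mp hx1
      rw [hWmem, map_smul, map_smul, hge, hgf, smul_eq_mul, smul_eq_mul] at hx2
      have ht : t = 0 := by
        rcases hx2 with ⟨ha, hb⟩
        by_contra ht0
        exact htrig k ⟨by
          have := mul_eq_zero.mp hb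
          rcases this with h | h
          · exact absurd h ht0
          · linarith, by
          have := mul_eq_zero.mp ha
          rcases this with h | h
          · exact absurd h ht0
          · exact h⟩
      rw [ht, zero_smul]
      exact Submodule.zero_mem ⊥

    have hfrk : ∀ k, finrank ℝ ((L k ⊓ W : Submodule ℝ V)) = n := by
      intro k
      have h2 := Submodule.finrank_sup_add_finrank_inf_eq (ℝ ∙ g k) (L k ⊓ W)
      have hinfbot : (ℝ ∙ g k) ⊓ (L k ⊓ W) = ⊥ := by
        rw [eq_bot_iff, ← hspanW k]
        exact inf_le_inf_left _ inf_le_right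
      rw [← hLk k, hinfbot, finrank_bot, add_zero, finrank_span_singleton (hgne k),
        hrank k] at h2
      omega
    -- finrank W = 2 n
    have hli : LinearIndependent ℝ ![e₀, f₀] := by
      rw [LinearIndependent.pair_iff]
      intro s t hst
      have h1' := congrArg (fun v => ω v f₀) hst
      have h2' := congrArg (fun v => ω e₀ v) hst
      simp only [map_add, map_smul, LinearMap.add_apply, LinearMap.smul_apply,
        smul_eq_mul, map_zero, LinearMap.zero_apply, halt, h1, hfe] at h1' h2'
      constructor <;> linarith
    have hfrW : finrank ℝ W = 2 * n := by
      set P : Submodule ℝ V := Submodule.span ℝ (Set.range ![e₀, f₀]) with hPdef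
      have hfrP : finrank ℝ P = 2 := by
        rw [hPdef, finrank_span_eq_card hli]
        simp
      have hPmem : ∀ x : V, x ∈ P ↔ ∃ a b : ℝ, a • e₀ + b • f₀ = x := by
        intro x
        rw [hPdef, show Set.range ![e₀, f₀] = {e₀, f₀} by
          simp [Matrix.range_cons, Set.pair_comm]]
        exact Submodule.mem_span_pair
      have hWP : W ⊓ P = ⊥ := by
        rw [eq_bot_iff]
        intro x hx
        rw [Submodule.mem_inf] at hx
        obtain ⟨hxW, hxP⟩ := hx
        obtain ⟨a, b, rfl⟩ := (hPmem _).mp hxP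
        rw [hWmem] at hxW
        simp only [map_add, map_smul, smul_eq_mul, halt, h1, hfe] at hxW
        obtain ⟨ha, hb⟩ := hxW
        have ha' : a = 0 := by linarith
        have hb' : b = 0 := by linarith
        rw [ha', hb', zero_smul, zero_smul, add_zero]
        exact Submodule.zero_mem ⊥
      have hWPtop : W ⊔ P = ⊤ := by
        rw [eq_top_iff]
        intro v _
        refine Submodule.mem_sup.mpr ⟨v - (ω e₀ v) • f₀ + (ω f₀ v) • e₀, hdecomp v,
          (ω e₀ v) • f₀ - (ω f₀ v) • e₀, ?_, by abel⟩
        have hfP : f₀ ∈ P := (hPmem f₀).mpr ⟨0, 1, by simp⟩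
        have heP : e₀ ∈ P := (hPmem e₀).mpr ⟨1, 0, by simp⟩
        exact sub_mem (smul_mem _ _ hfP) (smul_mem _ _ heP)
      have h2 := Submodule.finrank_sup_add_finrank_inf_eq W P
      rw [hWPtop, hWP, finrank_bot, add_zero, finrank_top, hfrP, hdim] at h2
      omega
    -- restrict ω to W
    set ωW : ↥W →ₗ[ℝ] ↥W →ₗ[ℝ] ℝ := LinearMap.BilinForm.restrict ω W with hωWdef
    have hωWapp : ∀ x y : W, ωW x y = ω (x : V) (y : V) := fun x y => rfl
    have haltW : ∀ x : W, ωW x x = 0 := fun x => halt (x : V)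
    have hndW : ∀ x : W, (∀ y : W, ωW x y = 0) → x = 0 := by
      intro x hx
      have hxV : (x : V) = 0 := by
        apply hnd
        intro v
        have hw := hdecomp v
        set w : V := v - (ω e₀ v) • f₀ + (ω f₀ v) • e₀ with hwdef
        have hv : v = w + (ω e₀ v) • f₀ - (ω f₀ v) • e₀ := by rw [hwdef]; abel
        have hxe : ω (x : V) e₀ = 0 := by
          rw [hskew]
          have := ((hWmem (x : V)).mp x.2).1
          rw [this, neg_zero]
        have hxf : ω (x : V) f₀ = 0 := by
          rw [hskew]
          have := ((hWmem (x : V)).mp x.2).2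
          rw [this, neg_zero]
        have hxw : ω (x : V) w = 0 := hx ⟨w, hw⟩
        rw [hv]
        simp only [map_add, map_sub, map_smul, smul_eq_mul, hxe, hxf, hxw]
        ring
      exact Subtype.ext hxV
    -- the Lagrangians in W
    set L' : Fin 3 → Submodule ℝ ↥W := fun k => Submodule.comap W.subtype (L k) with hL'def
    have hmapL' : ∀ k, Submodule.map W.subtype (L' k) = L k ⊓ W := by
      intro k
      rw [hL'def]
      rw [Submodule.map_comap_subtype]
      exact inf_comm _ _
    have hrank' : ∀ k, finrank ℝ (L' k) = n := by
      intro k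
      have : L' k = Submodule.comap W.subtype (L k ⊓ W) := by
        ext x
        simp only [hL'def, Submodule.mem_comap, Submodule.mem_inf]
        exact ⟨fun h => ⟨h, x.2⟩, fun h => h.1⟩
      rw [this]
      rw [(Submodule.comapSubtypeEquivOfLe (inf_le_right : L k ⊓ W ≤ W)).finrank_eq]
      exact hfrk k
    have hiso' : ∀ k, ∀ x ∈ L' k, ∀ y ∈ L' k, ωW x y = 0 := by
      intro k x hx y hy
      exact hiso k _ hx _ hy
    obtain ⟨e', f', hee', hff', hef', θ', hspan'⟩ := ih W ωW hfrW haltW hndW L' hrank' hiso'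
    -- assemble
    set e : Fin (n + 1) → V := Fin.cons e₀ (fun i => ((e' i : W) : V)) with hedef
    set f : Fin (n + 1) → V := Fin.cons f₀ (fun i => ((f' i : W) : V)) with hfdef
    have heW : ∀ i, ((e' i : W) : V) ∈ W := fun i => (e' i).2
    have hfW : ∀ i, ((f' i : W) : V) ∈ W := fun i => (f' i).2
    have hωe₀ : ∀ x : V, x ∈ W → ω e₀ x = 0 := fun x hx => ((hWmem x).mp hx).1
    have hωf₀ : ∀ x : V, x ∈ W → ω f₀ x = 0 := fun x hx => ((hWmem x).mp hx).2
    refine ⟨e, f, ?_, ?_, ?_, fun k => Fin.cons (θ₀ k) (θ' k), fun k => ?_⟩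
    · intro i j
      refine Fin.cases ?_ ?_ i <;> [skip; intro i'] <;> refine Fin.cases ?_ ?_ j <;>
        try intro j'
      · simpa [hedef] using halt e₀
      · simpa [hedef] using hωe₀ _ (heW _)
      · rw [hedef]
        simp only [Fin.cons_succ, Fin.cons_zero]
        rw [hskew]
        rw [hωe₀ _ (heW _), neg_zero]
      · rw [hedef]
        simp only [Fin.cons_succ]
        exact hee' i' j'
    · intro i j
      refine Fin.cases ?_ ?_ i <;> [skip; intro i'] <;> refine Fin.cases ?_ ?_ j <;>
        try intro j'
      · simpa [hfdef] using halt f₀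
      · simpa [hfdef] using hωf₀ _ (hfW _)
      · rw [hfdef]
        simp only [Fin.cons_succ, Fin.cons_zero]
        rw [hskew]
        rw [hωf₀ _ (hfW _), neg_zero]
      · rw [hfdef]
        simp only [Fin.cons_succ]
        exact hff' i' j'
    · intro i j
      refine Fin.cases ?_ ?_ i <;> [skip; intro i'] <;> refine Fin.cases ?_ ?_ j <;>
        try intro j'
      · simpa [hedef, hfdef] using h1
      · rw [hedef, hfdef]
        simp only [Fin.cons_succ, Fin.cons_zero]
        rw [hωe₀ _ (hfW _)]
        simp [(Fin.succ_ne_zero j').symm]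
      · rw [hedef, hfdef]
        simp only [Fin.cons_succ, Fin.cons_zero]
        rw [hskew, hωf₀ _ (heW _), neg_zero]
        simp [Fin.succ_ne_zero i']
      · rw [hedef, hfdef]
        simp only [Fin.cons_succ]
        have h := hef' i' j'
        rw [hωWapp] at h
        rw [h]
        simp [Fin.succ_inj]
    · -- the span
      have hmapspan : L k ⊓ W = Submodule.span ℝ (Set.range fun j : Fin n =>
          Real.cos (θ' k j) • ((e' j : W) : V) + Real.sin (θ' k j) • ((f' j : W) : V)) := by
        rw [← hmapL' k, hspan' k, Submodule.map_span, ← Set.range_comp]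
        congr 1
      have hfuneq : (fun j : Fin (n + 1) =>
            Real.cos ((Fin.cons (θ₀ k) (θ' k) : Fin (n + 1) → ℝ) j) • e j +
              Real.sin ((Fin.cons (θ₀ k) (θ' k) : Fin (n + 1) → ℝ) j) • f j)
          = Fin.cons (g k) (fun j : Fin n =>
            Real.cos (θ' k j) • ((e' j : W) : V) + Real.sin (θ' k j) • ((f' j : W) : V)) := by
        funext j
        refine Fin.cases ?_ ?_ j
        · simp [hedef, hfdef, hgdef]
        · intro i
          simp [hedef, hfdef]
      rw [hfuneq, Fin.range_cons, Submodule.span_insert, hLk k, hmapspan]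

end Main

/-- Theorem IV.5: any three Lagrangians of a symplectic vector space of dimension `2r`
admit a common symplectic basis description. -/
theorem stmt2 {V : Type*} [AddCommGroup V] [Module ℝ V] [FiniteDimensional ℝ V]
    (r : ℕ) (hdim : finrank ℝ V = 2 * r)
    (ω : V →ₗ[ℝ] V →ₗ[ℝ] ℝ)
    (halt : ∀ x : V, ω x x = 0)
    (hnd : ∀ x : V, (∀ y : V, ω x y = 0) → x = 0)
    (L : Fin 3 → Submodule ℝ V)
    (hrank : ∀ k, finrank ℝ (L k) = r)
    (hiso : ∀ k, ∀ x ∈ L k, ∀ y ∈ L k, ω x y = 0) :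
    ∃ (e f : Fin r → V),
      (∀ i j, ω (e i) (e j) = 0) ∧
      (∀ i j, ω (f i) (f j) = 0) ∧
      (∀ i j, ω (e i) (f j) = if i = j then 1 else 0) ∧
      ∃ θ : Fin 3 → Fin r → ℝ, ∀ k,
        L k = Submodule.span ℝ
          (Set.range fun j =>
            Real.cos (θ k j) • e j + Real.sin (θ k j) • f j) := by
  exact my_key r V ω hdim halt hnd L hrank hiso
end

section
/- Let f be a ℂ-affine map from Mₙ(ℂ) to itself which is an isometry for the operator norm and maps the closed unit ball into the closed unit ball. Then f(0) = 0; in particular f is linear. -/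
open Matrix
open scoped Matrix.Norms.L2Operator

/-! An isometric linear map of a finite-dimensional space is onto, so `f` maps the closed unit
ball onto its translate by `b = f 0`. A closed ball contains a translate of itself only if the
translation is trivial: the unit vector in the direction of `b` is moved to norm `1 + ‖b‖`. -/

theorem eq_zero_of_forall_norm_add_le_one {𝕜 E : Type*} [RCLike 𝕜] [NormedAddCommGroup E]
    [NormedSpace 𝕜 E] {b : E} (h : ∀ x : E, ‖x‖ ≤ 1 → ‖x + b‖ ≤ 1) : b = 0 := by
  by_contra hb
  have hb_pos : 0 < ‖b‖ := norm_pos_iff.mpr hb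
  set u : E := ((‖b‖⁻¹ : ℝ) : 𝕜) • b
  have hu : ‖u‖ = 1 := by
    rw [norm_smul, RCLike.norm_ofReal, abs_of_pos (inv_pos.mpr hb_pos),
      inv_mul_cancel₀ hb_pos.ne']
  have hub : ‖u + b‖ = 1 + ‖b‖ := by
    have : u + b = ((‖b‖⁻¹ + 1 : ℝ) : 𝕜) • b := by
      simp only [u, RCLike.ofReal_add, RCLike.ofReal_one, add_smul, one_smul]
    rw [this, norm_smul, RCLike.norm_ofReal, abs_of_pos (by positivity), add_mul,
      inv_mul_cancel₀ hb_pos.ne', one_mul]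
  linarith [h u hu.le]

theorem LinearMap.surjective_of_norm_map {𝕜 E : Type*} [NontriviallyNormedField 𝕜]
    [NormedAddCommGroup E] [NormedSpace 𝕜 E] [FiniteDimensional 𝕜 E] (ℓ : E →ₗ[𝕜] E)
    (hℓ : ∀ x, ‖ℓ x‖ = ‖x‖) : Function.Surjective ℓ :=
  LinearMap.injective_iff_surjective.mp (LinearIsometry.injective ⟨ℓ, hℓ⟩)

/-- Corollary III.6 for `D₁ = D₂` the matrix ball: an affine isometry of `Mₙ(ℂ)`
(for the operator norm) mapping the closed unit ball into itself fixes the origin,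
hence is linear. -/
theorem stmt5 (n : ℕ) (f : Matrix (Fin n) (Fin n) ℂ → Matrix (Fin n) (Fin n) ℂ)
    (ℓ : Matrix (Fin n) (Fin n) ℂ →ₗ[ℂ] Matrix (Fin n) (Fin n) ℂ)
    (b : Matrix (Fin n) (Fin n) ℂ)
    (haff : ∀ x, f x = ℓ x + b)
    (hiso : Isometry f)
    (hball : ∀ x : Matrix (Fin n) (Fin n) ℂ, ‖x‖ ≤ 1 → ‖f x‖ ≤ 1) :
    f 0 = 0 := by
  have hℓ : ∀ x, ‖ℓ x‖ = ‖x‖ := fun x => by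
    simpa [haff, dist_eq_norm] using hiso.dist_eq x 0
  have hb : b = 0 := eq_zero_of_forall_norm_add_le_one (𝕜 := ℂ) fun z hz => by
    obtain ⟨x, rfl⟩ := ℓ.surjective_of_norm_map hℓ z
    rw [← haff]
    exact hball x ((hℓ x).symm ▸ hz)
  rw [haff, map_zero, hb, add_zero]
end

section
/- Equip Fin r → ℂ with the sup norm and M_r(ℂ) with the operator norm. Let f : (Fin r → ℂ) → M_r(ℂ) be a ℂ-affine isometric map sending the closed unit polydisc {x : max_j |x_j| ≤ 1} into the closed unit ball of M_r(ℂ). Then f(0) = 0 (so f is linear), and f maps the torus {x : |x_j| = 1 for all j} into the unitary group Uᵣ(ℂ). -/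
/-!
Write `f = ℓ + b` and fix `x` on the torus; as `c ↦ c * x` is an isometry of the sup norm, we may
replace `ℓ` by `c ↦ ℓ (c * x)` and work at the point `1`. View `Aⱼ = ℓ (eⱼ)` as operators on
`ℂʳ` and choose unit vectors `vⱼ` with `‖Aⱼ vⱼ‖ = ‖Aⱼ‖ = 1`. Since `‖eⱼ ± eₖ‖ = 1`, the
parallelogram law applied to `Aⱼ vⱼ ± Aₖ vⱼ` forces `Aₖ vⱼ = 0` for `k ≠ j`. Hence the `vⱼ` form
a basis and `ℓ 1 = ∑ Aₖ` satisfies `‖ℓ 1 vⱼ‖ = 1`. The parallelogram law applied to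
`(± ℓ 1 + b) vⱼ`, both of norm `≤ 1`, gives `b vⱼ = 0`, and a contraction `T` with
`‖T v‖ = ‖v‖` satisfies `T⋆ T v = v`; so `b = 0` and `ℓ 1` is unitary.
-/

open Matrix
open scoped Matrix.Norms.L2Operator

theorem eq_zero_of_norm_add_le_of_norm_sub_le (𝕜 : Type*) {F : Type*} [RCLike 𝕜]
    [NormedAddCommGroup F] [InnerProductSpace 𝕜 F] {a w : F} (h₁ : ‖a + w‖ ≤ ‖a‖)
    (h₂ : ‖a - w‖ ≤ ‖a‖) : w = 0 := by
  have hpar := parallelogram_law_with_norm 𝕜 a w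
  have hw : ‖w‖ * ‖w‖ ≤ 0 := by
    nlinarith [norm_nonneg (a + w), norm_nonneg (a - w), norm_nonneg a]
  exact norm_eq_zero.1 (mul_self_eq_zero.1 (le_antisymm hw (mul_self_nonneg _)))

theorem ContinuousLinearMap.adjoint_apply_apply_eq_self_of_norm_apply_eq {𝕜 F : Type*}
    [RCLike 𝕜] [NormedAddCommGroup F] [InnerProductSpace 𝕜 F] [CompleteSpace F]
    {T : F →L[𝕜] F} (hT : ‖T‖ ≤ 1) {v : F} (hv : ‖T v‖ = ‖v‖) : adjoint T (T v) = v := by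
  set u := adjoint T (T v)
  have hu : ‖u‖ ≤ ‖v‖ :=
    calc ‖u‖ ≤ ‖adjoint T‖ * ‖T v‖ := (adjoint T).le_opNorm (T v)
      _ ≤ 1 * ‖v‖ := by rw [LinearIsometryEquiv.norm_map, hv]; gcongr
      _ = ‖v‖ := one_mul _
  have hinner : RCLike.re (inner 𝕜 u v) = ‖v‖ ^ 2 := by
    rw [adjoint_inner_left, inner_self_eq_norm_sq, hv]
  have hdist : ‖u - v‖ ^ 2 ≤ 0 := by
    rw [norm_sub_sq (𝕜 := 𝕜), hinner]
    nlinarith [norm_nonneg u]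
  rw [← sub_eq_zero, ← norm_le_zero_iff]
  nlinarith [norm_nonneg (u - v)]

theorem ContinuousLinearMap.exists_norm_le_one_norm_apply_eq_opNorm {𝕜 E F : Type*} [RCLike 𝕜]
    [NormedAddCommGroup E] [NormedSpace 𝕜 E] [FiniteDimensional 𝕜 E] [NormedAddCommGroup F]
    [NormedSpace 𝕜 F] (T : E →L[𝕜] F) : ∃ v, ‖v‖ ≤ 1 ∧ ‖T v‖ = ‖T‖ := by
  have := FiniteDimensional.proper_rclike 𝕜 E
  obtain ⟨v, hv, hTv⟩ := ((isCompact_closedBall (0 : E) 1).image T.continuous.norm).sSup_mem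
    ((Metric.nonempty_closedBall.2 zero_le_one).image _)
  exact ⟨v, mem_closedBall_zero_iff.1 hv, hTv.trans T.sSup_unitClosedBall_eq_norm⟩

theorem linearIndependent_of_apply_ne_zero_of_apply_eq_zero {K M N ι : Type*} [Field K]
    [AddCommGroup M] [Module K M] [AddCommGroup N] [Module K N] {v : ι → M}
    (A : ι → M →ₗ[K] N) (hne : ∀ j, A j (v j) ≠ 0) (hzero : ∀ j k, k ≠ j → A k (v j) = 0) :
    LinearIndependent K v := by
  rw [linearIndependent_iff']
  intro s g hg j hj
  have hAj := congrArg (A j) hg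
  simp only [map_sum, map_smul, map_zero] at hAj
  rw [Finset.sum_eq_single_of_mem j hj fun k _ hkj => by rw [hzero k j (Ne.symm hkj), smul_zero]]
    at hAj
  exact (smul_eq_zero.1 hAj).resolve_right (hne j)

theorem Pi.norm_single_add_single_le {ι G : Type*} [Fintype ι] [DecidableEq ι]
    [NormedAddCommGroup G] {j k : ι} (hjk : j ≠ k) (a b : G) :
    ‖(Pi.single j a + Pi.single k b : ι → G)‖ ≤ max ‖a‖ ‖b‖ := by
  refine (pi_norm_le_iff_of_nonneg (by positivity)).2 fun i => ?_
  rcases eq_or_ne i j with rfl | hij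
  · simp [hjk]
  rcases eq_or_ne i k with rfl | hik
  · simp [hij]
  · simp [hij, hik]

theorem Pi.norm_mul_of_forall_norm_eq_one {ι 𝕜 : Type*} [Fintype ι] [NormedDivisionRing 𝕜]
    (c : ι → 𝕜) {x : ι → 𝕜} (hx : ∀ j, ‖x j‖ = 1) : ‖c * x‖ = ‖c‖ := by
  have hx' : ∀ j, ‖x j‖₊ = 1 := fun j => NNReal.eq (hx j)
  simp [Pi.norm_def, nnnorm_mul, hx']

section

open ContinuousLinearMap Module

variable {𝕜 ι E : Type*} [RCLike 𝕜] [Fintype ι] [DecidableEq ι] [NormedAddCommGroup E]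
  [InnerProductSpace 𝕜 E] [FiniteDimensional 𝕜 E] {L : (ι → 𝕜) →ₗ[𝕜] E →L[𝕜] E}

theorem exists_norm_apply_single_eq_one (hL : ∀ c, ‖L c‖ = ‖c‖) (j : ι) :
    ∃ v : E, ‖v‖ ≤ 1 ∧ ‖L (Pi.single j 1) v‖ = 1 ∧ ∀ k ≠ j, L (Pi.single k 1) v = 0 := by
  obtain ⟨v, hv, hAv⟩ := (L (Pi.single j 1)).exists_norm_le_one_norm_apply_eq_opNorm
  rw [hL, Pi.norm_single, norm_one] at hAv
  have hball : ∀ c : ι → 𝕜, ‖c‖ ≤ 1 → ‖L c v‖ ≤ 1 := fun c hc => by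
    simpa using (L c).le_of_opNorm_le_of_le ((hL c).trans_le hc) hv
  refine ⟨v, hv, hAv, fun k hkj =>
    eq_zero_of_norm_add_le_of_norm_sub_le 𝕜 (a := L (Pi.single j 1) v) ?_ ?_⟩
  · rw [hAv, ← _root_.add_apply, ← map_add]
    exact hball _ (by simpa using Pi.norm_single_add_single_le hkj.symm (1 : 𝕜) 1)
  · rw [hAv, ← _root_.sub_apply, ← map_sub, sub_eq_add_neg, ← Pi.single_neg]
    exact hball _ (by simpa using Pi.norm_single_add_single_le hkj.symm (1 : 𝕜) (-1))

theorem eq_zero_and_norm_map_apply_one (hdim : Fintype.card ι = finrank 𝕜 E)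
    (hL : ∀ c, ‖L c‖ = ‖c‖) {B : E →L[𝕜] E} (hB : ∀ c : ι → 𝕜, ‖c‖ ≤ 1 → ‖L c + B‖ ≤ 1) :
    B = 0 ∧ ∀ x, ‖L 1 x‖ = ‖x‖ := by
  have := FiniteDimensional.complete 𝕜 E
  choose v hv_le hv_norm hv_zero using exists_norm_apply_single_eq_one hL
  have hv : ∀ j, ‖v j‖ = 1 := fun j => le_antisymm (hv_le j) <| by
    simpa [hv_norm, hL, Pi.norm_single] using (L (Pi.single j 1)).le_opNorm (v j)
  have hspan : Submodule.span 𝕜 (Set.range v) = ⊤ :=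
    (linearIndependent_of_apply_ne_zero_of_apply_eq_zero
      (fun k => (L (Pi.single k 1) : E →ₗ[𝕜] E))
      (fun j h => one_ne_zero ((hv_norm j).symm.trans (norm_eq_zero.2 h))) hv_zero
      ).span_eq_top_of_card_eq_finrank' hdim
  have hSv : ∀ j, ‖L 1 (v j)‖ = 1 := fun j => by
    have hsum : (1 : ι → 𝕜) = ∑ k, Pi.single k 1 := (Finset.univ_sum_single 1).symm
    rw [hsum, map_sum, _root_.sum_apply,
      Finset.sum_eq_single j (fun k _ hkj => hv_zero j k hkj) (by simp), hv_norm]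
  have hone : ‖(1 : ι → 𝕜)‖ ≤ 1 := (pi_norm_le_iff_of_nonneg zero_le_one).2 fun _ => norm_one.le
  have hball : ∀ c : ι → 𝕜, ‖c‖ ≤ 1 → ∀ j, ‖(L c + B) (v j)‖ ≤ 1 := fun c hc j => by
    simpa using (L c + B).le_of_opNorm_le_of_le (hB c hc) (hv j).le
  have hBv : ∀ j, B (v j) = 0 := fun j => by
    refine eq_zero_of_norm_add_le_of_norm_sub_le 𝕜 (a := L 1 (v j)) ?_ ?_
    · rw [hSv, ← _root_.add_apply]
      exact hball 1 hone j
    · have h := hball (-1) (by simpa using hone) j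
      rwa [map_neg, _root_.add_apply, _root_.neg_apply, neg_add_eq_sub, norm_sub_rev, ← hSv j] at h
  refine ⟨coe_injective (LinearMap.ext_on_range hspan fun j => by simpa using hBv j),
    (norm_map_iff_adjoint_comp_self _).2 <| coe_injective <| LinearMap.ext_on_range hspan
      fun j => ?_⟩
  exact adjoint_apply_apply_eq_self_of_norm_apply_eq ((hL 1).trans_le hone)
    ((hSv j).trans (hv j).symm)

end

/-- Theorem III.5 for `V = Mᵣ(ℂ)`: an affine isometric map from the polydisc
(sup norm on `Fin r → ℂ`) into the matrix ball is linear and maps the torus into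
the unitary group. -/
theorem stmt6 (r : ℕ) (f : (Fin r → ℂ) → Matrix (Fin r) (Fin r) ℂ)
    (ℓ : (Fin r → ℂ) →ₗ[ℂ] Matrix (Fin r) (Fin r) ℂ)
    (b : Matrix (Fin r) (Fin r) ℂ)
    (haff : ∀ x, f x = ℓ x + b)
    (hiso : Isometry f)
    (hpoly : ∀ x : Fin r → ℂ, (∀ j, ‖x j‖ ≤ 1) → ‖f x‖ ≤ 1) :
    f 0 = 0 ∧
    ∀ x : Fin r → ℂ, (∀ j, ‖x j‖ = 1) → (f x)ᴴ * f x = 1 := by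
  have hℓ : ∀ z, ‖ℓ z‖ = ‖z‖ := fun z => by
    simpa [haff, dist_eq_norm] using hiso.dist_eq z 0
  have key : ∀ x : Fin r → ℂ, (∀ j, ‖x j‖ = 1) → b = 0 ∧ (ℓ x)ᴴ * ℓ x = 1 := by
    intro x hx
    have hmul : ∀ c : Fin r → ℂ, ‖c * x‖ = ‖c‖ := fun c => Pi.norm_mul_of_forall_norm_eq_one c hx
    obtain ⟨hb, hunit⟩ := eq_zero_and_norm_map_apply_one (E := EuclideanSpace ℂ (Fin r))
      (L := toEuclideanCLM.toAlgEquiv.toLinearMap ∘ₗ ℓ ∘ₗ LinearMap.mulRight ℂ x)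
      (B := toEuclideanCLM (n := Fin r) (𝕜 := ℂ) b) (by simp)
      (fun c => by simp [← cstar_norm_def, hℓ, hmul])
      (fun c hc => by
        simpa [← cstar_norm_def, ← map_add, ← haff] using hpoly (c * x)
          fun j => (norm_le_pi_norm (c * x) j).trans ((hmul c).trans_le hc))
    have hinj : Function.Injective (toEuclideanCLM (n := Fin r) (𝕜 := ℂ)) := EquivLike.injective _
    refine ⟨hinj (by simpa using hb), hinj ?_⟩
    rw [map_mul, map_one, ← star_eq_conjTranspose, map_star, ContinuousLinearMap.star_eq_adjoint,
      ContinuousLinearMap.mul_def]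
    simpa using (ContinuousLinearMap.norm_map_iff_adjoint_comp_self _).1 hunit
  obtain ⟨hb, -⟩ := key 1 fun _ => norm_one
  refine ⟨by rw [haff, map_zero, hb, add_zero], fun x hx => ?_⟩
  rw [haff, hb, add_zero]
  exact (key x hx).2
end

section
/- Let r ≥ 0 and r₀, r₁, r₂, r₃, d be integers. Then there exist integers n₁, n₂, n₃, n₄, n₅ with 0 ≤ n₁ ≤ n₂ ≤ n₃ ≤ n₄ ≤ n₅ ≤ r, r₀ = n₁, r₁ = n₂, r₂ = n₃ − n₂ + n₁, r₃ = n₄ − n₃ + n₁ and d = 2n₅ − n₄ − r, if and only if the following conditions hold: (P1) 0 ≤ r₀ ≤ rᵢ ≤ r for i = 1,2,3; (P2) r₁ + r₂ + r₃ ≤ r + 2r₀; (P3) |d| ≤ r + 2r₀ − (r₁ + r₂ + r₃); (P4) d ≡ r + r₁ + r₂ + r₃ (mod 2). -/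
/-!
The map `(n₁, …, n₅) ↦ (r₀, r₁, r₂, r₃, d)` is inverted by `n₁ = r₀`, `n₂ = r₁`,
`n₃ = r₁ + r₂ - r₀`, `n₄ = r₁ + r₂ + r₃ - 2 r₀` and `n₅ = (d + n₄ + r) / 2`. Under this
substitution the chain `0 ≤ n₁ ≤ ⋯ ≤ n₄ ≤ r` becomes (P1)–(P2), while the existence of an
integer `n₅ ∈ [n₄, r]` becomes `|d| ≤ r - n₄`, which is (P3), together with the parity
condition (P4).
-/

theorem exists_mem_Icc_eq_two_mul_sub_sub_iff (a r d : ℤ) :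
    (∃ m ∈ Set.Icc a r, d = 2 * m - a - r) ↔ |d| ≤ r - a ∧ d ≡ r + a [ZMOD 2] := by
  constructor
  · rintro ⟨m, ⟨ham, hmr⟩, rfl⟩
    refine ⟨abs_le.2 ⟨by linarith, by linarith⟩, Int.modEq_iff_dvd.2 ⟨r + a - m, by ring⟩⟩
  · rintro ⟨habs, hmod⟩
    obtain ⟨hlo, hhi⟩ := abs_le.1 habs
    obtain ⟨k, hk⟩ := Int.modEq_iff_dvd.1 hmod
    exact ⟨r + a - k, ⟨by linarith, by linarith⟩, by linarith⟩

theorem stmt11_general (r r₀ r₁ r₂ r₃ d : ℤ) :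
    (∃ n₁ n₂ n₃ n₄ n₅ : ℤ,
        0 ≤ n₁ ∧ n₁ ≤ n₂ ∧ n₂ ≤ n₃ ∧ n₃ ≤ n₄ ∧ n₄ ≤ n₅ ∧ n₅ ≤ r ∧
        r₀ = n₁ ∧ r₁ = n₂ ∧ r₂ = n₃ - n₂ + n₁ ∧ r₃ = n₄ - n₃ + n₁ ∧
        d = 2 * n₅ - n₄ - r) ↔
      ((0 ≤ r₀ ∧ r₀ ≤ r₁ ∧ r₀ ≤ r₂ ∧ r₀ ≤ r₃ ∧ r₁ ≤ r ∧ r₂ ≤ r ∧ r₃ ≤ r) ∧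
        r₁ + r₂ + r₃ ≤ r + 2 * r₀ ∧
        |d| ≤ r + 2 * r₀ - (r₁ + r₂ + r₃) ∧
        d ≡ r + r₁ + r₂ + r₃ [ZMOD 2]) := by
  set n₄ := r₁ + r₂ + r₃ - 2 * r₀
  have hbound : r + 2 * r₀ - (r₁ + r₂ + r₃) = r - n₄ := by ring
  have hparity : r + r₁ + r₂ + r₃ ≡ r + n₄ [ZMOD 2] := Int.modEq_iff_dvd.2 ⟨-r₀, by ring⟩
  have hd : d ≡ r + r₁ + r₂ + r₃ [ZMOD 2] ↔ d ≡ r + n₄ [ZMOD 2] :=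
    ⟨(·.trans hparity), (·.trans hparity.symm)⟩
  rw [hbound, hd, ← exists_mem_Icc_eq_two_mul_sub_sub_iff]
  constructor
  · rintro ⟨n₁, n₂, n₃, n₄', n₅, h₁, h₂, h₃, h₄, h₅, h₆, rfl, rfl, rfl, rfl, rfl⟩
    refine ⟨⟨by omega, by omega, by omega, by omega, by omega, by omega, by omega⟩, by omega,
      n₅, ⟨by omega, h₆⟩, by omega⟩
  · rintro ⟨⟨h₀, h₀₁, h₀₂, h₀₃, h₁, h₂, h₃⟩, hsum, n₅, ⟨h₄, h₅⟩, rfl⟩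
    exact ⟨r₀, r₁, r₁ + r₂ - r₀, n₄, n₅, h₀, h₀₁, by omega, by omega, h₄, h₅,
      rfl, rfl, by ring, by omega, rfl⟩

/-- Remark V.5: the integer invariants `(r₀, r₁, r₂, r₃, d)` arising from the
classifying 5-tuples `n₁ ≤ n₂ ≤ n₃ ≤ n₄ ≤ n₅ ≤ r` are exactly those satisfying
(P1)-(P4). -/
theorem stmt11 (r r₀ r₁ r₂ r₃ d : ℤ) (hr : 0 ≤ r) :
    (∃ n₁ n₂ n₃ n₄ n₅ : ℤ,
        0 ≤ n₁ ∧ n₁ ≤ n₂ ∧ n₂ ≤ n₃ ∧ n₃ ≤ n₄ ∧ n₄ ≤ n₅ ∧ n₅ ≤ r ∧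
        r₀ = n₁ ∧ r₁ = n₂ ∧ r₂ = n₃ - n₂ + n₁ ∧ r₃ = n₄ - n₃ + n₁ ∧
        d = 2 * n₅ - n₄ - r) ↔
      ((0 ≤ r₀ ∧ r₀ ≤ r₁ ∧ r₀ ≤ r₂ ∧ r₀ ≤ r₃ ∧ r₁ ≤ r ∧ r₂ ≤ r ∧ r₃ ≤ r) ∧
        r₁ + r₂ + r₃ ≤ r + 2 * r₀ ∧
        |d| ≤ r + 2 * r₀ - (r₁ + r₂ + r₃) ∧
        d ≡ r + r₁ + r₂ + r₃ [ZMOD 2]) :=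
  stmt11_general r r₀ r₁ r₂ r₃ d
end

section
/- Let x, y, z be pairwise distinct complex numbers with |x| = |y| = |z| = 1. Then there exist complex numbers a, b with |a|² − |b|² = 1 such that b̄w + ā ≠ 0 for w ∈ {x,y,z}, (ax + b)(b̄x + ā)⁻¹ = 1, (ay + b)(b̄y + ā)⁻¹ = −1, and (az + b)(b̄z + ā)⁻¹ equals either i or −i. -/
/-!
The Möbius map `g` with `g x = 1`, `g y = -1`, `g z = I` is given by a matrix `(p q; r s)`
determined only up to a complex scalar. At a point of the circle whose image lies on the circle,
the symmetrized pairs `(p + s̄, q + r̄)` and `(I p + conj (I s), I q + conj (I r))` act like `g`, and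
they have the `SU(1,1)` shape `(A B; B̄ Ā)`. By the parallelogram law the sum of their forms
`|A|² - |B|²` is `2 (|p|² + |s|² - |q|² - |r|²) = -8 I (x - y)(y - z)(z - x) / (x y z)`, which is
nonzero for distinct points: this is where the orientation of the triple enters. So one pair has
`|A| ≠ |B|`. If `|A| < |B|`, the pair `(B̄, Ā)` acts as `w ↦ 1 / g w`, which fixes `±1` and swaps
`±I`. Dividing by `√(|A|² - |B|²)` finally lands in `SU(1,1)`.
-/

open Complex ComplexConjugate

/-- `(A w + B) / (conj B * w + conj A) = c` with the denominator cleared, so it does not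
exclude a vanishing denominator. -/
def MobiusSends (A B w c : ℂ) : Prop := A * w + B = c * (conj B * w + conj A)

namespace MobiusSends

variable {A B w c : ℂ}

lemma div_ofReal (h : MobiusSends A B w c) (t : ℝ) : MobiusSends (A / t) (B / t) w c := by
  unfold MobiusSends at h ⊢
  simp only [map_div₀, conj_ofReal]
  linear_combination h / (t : ℂ)

lemma swap (h : MobiusSends A B w c) (hc : c ≠ 0) : MobiusSends (conj B) (conj A) w c⁻¹ := by
  unfold MobiusSends at h ⊢
  rw [conj_conj, conj_conj, h, inv_mul_cancel_left₀ hc]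

lemma mul_inv_eq (h : MobiusSends A B w c) (hd : conj B * w + conj A ≠ 0) :
    (A * w + B) * (conj B * w + conj A)⁻¹ = c := by
  rw [h, mul_inv_cancel_right₀ hd]

end MobiusSends

lemma conj_mul_add_conj_ne_zero {A B w : ℂ} (hw : ‖w‖ = 1) (hAB : ‖B‖ < ‖A‖) :
    conj B * w + conj A ≠ 0 := by
  intro h
  have : ‖conj A‖ = ‖conj B * w‖ := by rw [eq_neg_of_add_eq_zero_right h, norm_neg]
  simp only [norm_conj, norm_mul, hw, mul_one] at this
  exact hAB.ne' this

lemma mobiusSends_add_conj {p q r s w c : ℂ} (h : p * w + q = c * (r * w + s))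
    (hw : ‖w‖ = 1) (hc : ‖c‖ = 1) : MobiusSends (p + conj s) (q + conj r) w c := by
  have hw1 : w * conj w = 1 := by simp [mul_conj', hw]
  have hc1 : c * conj c = 1 := by simp [mul_conj', hc]
  have hconj := congrArg conj h
  simp only [map_add, map_mul] at hconj
  unfold MobiusSends
  simp only [map_add, conj_conj]
  -- `c w • conj h` reads `conj s * w + conj r = c * (conj q * w + conj p)` on the circle
  linear_combination h - c * w * hconj + (c * conj p - conj r) * hw1 -
    (conj s * w + conj r * w * conj w) * hc1

lemma normSq_add_conj_parallelogram (p q r s : ℂ) :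
    (normSq (p + conj s) - normSq (q + conj r)) +
      (normSq (I * p + conj (I * s)) - normSq (I * q + conj (I * r))) =
      2 * (normSq p + normSq s - normSq q - normSq r) := by
  have hI (u v : ℂ) : I * u + conj (I * v) = I * (u - conj v) := by
    simp only [map_mul, conj_I, neg_mul]; ring
  simp only [hI, normSq_mul, normSq_I, one_mul, normSq_add, normSq_sub, normSq_conj]
  ring

lemma normSq_crossRatio_combination_ne_zero {x y z : ℂ} (hx : ‖x‖ = 1) (hy : ‖y‖ = 1)
    (hz : ‖z‖ = 1) (hxy : x ≠ y) (hyz : y ≠ z) (hxz : x ≠ z) :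
    normSq ((z - x) + I * (z - y)) + normSq (y * (z - x) - I * x * (z - y)) -
      normSq (y * (z - x) + I * x * (z - y)) - normSq ((z - x) - I * (z - y)) ≠ 0 := by
  have h0 (w : ℂ) (hw : ‖w‖ = 1) : w ≠ 0 := norm_ne_zero_iff.1 (by simp [hw])
  have key : ((normSq ((z - x) + I * (z - y)) + normSq (y * (z - x) - I * x * (z - y)) -
      normSq (y * (z - x) + I * x * (z - y)) - normSq ((z - x) - I * (z - y)) : ℝ) : ℂ) =
      -4 * I * ((x - y) * (y - z) * (z - x)) / (x * y * z) := by
    push_cast [← mul_conj]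
    simp only [map_add, map_sub, map_mul, conj_I, ← inv_eq_conj hx, ← inv_eq_conj hy,
      ← inv_eq_conj hz]
    field_simp [h0 x hx, h0 y hy, h0 z hz]
    ring
  rw [← ofReal_ne_zero, key]
  simp [sub_eq_zero, hxy, hyz, hxz.symm, h0 x hx, h0 y hy, h0 z hz]

lemma exists_mobiusSends_one_neg_one_I {x y z : ℂ} (hx : ‖x‖ = 1) (hy : ‖y‖ = 1)
    (hz : ‖z‖ = 1) (hxy : x ≠ y) (hyz : y ≠ z) (hxz : x ≠ z) :
    ∃ A B : ℂ, MobiusSends A B x 1 ∧ MobiusSends A B y (-1) ∧ MobiusSends A B z I ∧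
      ‖A‖ ≠ ‖B‖ := by
  -- `g w = (p w + q) / (r w + s)` is the solution of
  -- `(g w - 1) / (g w + 1) = I (w - x)(z - y) / ((w - y)(z - x))`
  set p := (z - x) + I * (z - y)
  set q := -(y * (z - x) + I * x * (z - y))
  set r := (z - x) - I * (z - y)
  set s := -(y * (z - x) - I * x * (z - y))
  have hgx : p * x + q = 1 * (r * x + s) := by ring
  have hgy : p * y + q = -1 * (r * y + s) := by ring
  have hgz : p * z + q = I * (r * z + s) := by linear_combination (z - x) * (z - y) * I_sq
  have horient : normSq p + normSq s - normSq q - normSq r ≠ 0 := by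
    simpa only [q, s, normSq_neg] using
      normSq_crossRatio_combination_ne_zero hx hy hz hxy hyz hxz
  have hsum := normSq_add_conj_parallelogram p q r s
  have norm_ne {A B : ℂ} (h : normSq A ≠ normSq B) : ‖A‖ ≠ ‖B‖ := fun h' =>
    h (by rw [normSq_eq_norm_sq, normSq_eq_norm_sq, h'])
  by_cases h1 : normSq (p + conj s) = normSq (q + conj r)
  · refine ⟨I * p + conj (I * s), I * q + conj (I * r),
      mobiusSends_add_conj (by linear_combination I * hgx) hx (by simp),
      mobiusSends_add_conj (by linear_combination I * hgy) hy (by simp),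
      mobiusSends_add_conj (by linear_combination I * hgz) hz (by simp), norm_ne ?_⟩
    intro h2
    exact horient (by linarith)
  · exact ⟨p + conj s, q + conj r, mobiusSends_add_conj hgx hx (by simp),
      mobiusSends_add_conj hgy hy (by simp), mobiusSends_add_conj hgz hz (by simp), norm_ne h1⟩

lemma exists_mobiusSends_one_neg_one_I_or_neg_I {x y z : ℂ} (hx : ‖x‖ = 1) (hy : ‖y‖ = 1)
    (hz : ‖z‖ = 1) (hxy : x ≠ y) (hyz : y ≠ z) (hxz : x ≠ z) :
    ∃ A B c : ℂ, (c = I ∨ c = -I) ∧ MobiusSends A B x 1 ∧ MobiusSends A B y (-1) ∧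
      MobiusSends A B z c ∧ ‖B‖ < ‖A‖ := by
  obtain ⟨A, B, h1, h2, h3, hAB⟩ := exists_mobiusSends_one_neg_one_I hx hy hz hxy hyz hxz
  rcases hAB.lt_or_gt with hlt | hgt
  · refine ⟨conj B, conj A, -I, Or.inr rfl, ?_, ?_, ?_, by simpa using hlt⟩
    · simpa using h1.swap one_ne_zero
    · simpa using h2.swap (neg_ne_zero.2 one_ne_zero)
    · simpa using h3.swap I_ne_zero
  · exact ⟨A, B, I, Or.inl rfl, h1, h2, h3, hgt⟩

lemma exists_su11_of_norm_lt {A B : ℂ} (hAB : ‖B‖ < ‖A‖) :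
    ∃ a b : ℂ, ‖a‖ ^ 2 - ‖b‖ ^ 2 = 1 ∧ ∀ w c : ℂ, ‖w‖ = 1 → MobiusSends A B w c →
      conj b * w + conj a ≠ 0 ∧ (a * w + b) * (conj b * w + conj a)⁻¹ = c := by
  have hpos : 0 < ‖A‖ ^ 2 - ‖B‖ ^ 2 := by nlinarith [norm_nonneg B]
  set t := √(‖A‖ ^ 2 - ‖B‖ ^ 2)
  have ht : 0 < t := Real.sqrt_pos.2 hpos
  have hnorm : ‖A / t‖ ^ 2 - ‖B / t‖ ^ 2 = 1 := by
    rw [norm_div, norm_div, norm_real, Real.norm_of_nonneg ht.le, div_pow, div_pow, ← sub_div,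
      Real.sq_sqrt hpos.le, div_self hpos.ne']
  have hlt : ‖B / t‖ < ‖A / t‖ := by nlinarith [norm_nonneg (B / t), norm_nonneg (A / t)]
  refine ⟨A / t, B / t, hnorm, fun w c hw h => ?_⟩
  have hd := conj_mul_add_conj_ne_zero hw hlt
  exact ⟨hd, (h.div_ofReal t).mul_inv_eq hd⟩

/-- Example IV.3 (triples): every triple of pairwise distinct points of the unit
circle is conjugate under `SU(1,1)` to `(1, -1, ±i)`. -/
theorem stmt16 (x y z : ℂ) (hx : ‖x‖ = 1) (hy : ‖y‖ = 1)
    (hz : ‖z‖ = 1) (hxy : x ≠ y) (hyz : y ≠ z) (hxz : x ≠ z) :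
    ∃ a b : ℂ, ‖a‖ ^ 2 - ‖b‖ ^ 2 = 1 ∧
      (∀ w ∈ ({x, y, z} : Set ℂ), starRingEnd ℂ b * w + starRingEnd ℂ a ≠ 0) ∧
      (a * x + b) * (starRingEnd ℂ b * x + starRingEnd ℂ a)⁻¹ = 1 ∧
      (a * y + b) * (starRingEnd ℂ b * y + starRingEnd ℂ a)⁻¹ = -1 ∧
      ((a * z + b) * (starRingEnd ℂ b * z + starRingEnd ℂ a)⁻¹ = Complex.I ∨
        (a * z + b) * (starRingEnd ℂ b * z + starRingEnd ℂ a)⁻¹ = -Complex.I) := by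
  obtain ⟨A, B, c, hc, hAx, hAy, hAz, hAB⟩ :=
    exists_mobiusSends_one_neg_one_I_or_neg_I hx hy hz hxy hyz hxz
  obtain ⟨a, b, hab, hact⟩ := exists_su11_of_norm_lt hAB
  refine ⟨a, b, hab, ?_, (hact x 1 hx hAx).2, (hact y (-1) hy hAy).2, ?_⟩
  · rintro w (rfl | rfl | rfl)
    exacts [(hact _ _ hx hAx).1, (hact _ _ hy hAy).1, (hact _ _ hz hAz).1]
  · rw [(hact z c hz hAz).2]
    exact hc
end
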